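/- arXiv:1002.2883 — 9 statements merged into one kernel-verified Lean document; each statement's English description precedes it below -/
import Mathlib

section
/- Let X be a topological space and let τ be a topology on C(X,$) such that every τ-open subset of C(X,$) is openly isotone and, for every x ∈ X, the family 𝒪(x) := {U ∈ C(X,$) : x ∈ U} is τ-open. Then for every A ∈ C(X,$), the τ-closure of the singleton {A} equals {O ∈ C(X,$) : O ⊆ A}. -/
open TopologicalSpace Topology

/-- A family of open sets is *openly isotone* if it is upward closed among open sets. -/
def OpenlyIsotone {X : Type*} [TopologicalSpace X] (A : Set (Opens X)) : Prop :=
  ∀ ⦃U V : Opens X⦄, U ∈ A → U ≤ V → V ∈ A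

section

variable {X : Type*} [TopologicalSpace X] (τ : TopologicalSpace (Opens X))

theorem isClosed_setOf_le_of_isOpen_setOf_mem (hp : ∀ x : X, IsOpen[τ] {U : Opens X | x ∈ U})
    (A : Opens X) : IsClosed[τ] {O : Opens X | O ≤ A} := by
  have hcompl : {O : Opens X | O ≤ A}ᶜ = ⋃ x ∈ (A : Set X)ᶜ, {U : Opens X | x ∈ U} := by
    ext O
    simp [SetLike.le_def, and_comm]
  rw [← @isOpen_compl_iff, hcompl]
  exact @isOpen_biUnion _ _ τ _ _ fun x _ => hp x

theorem mem_closure_singleton_of_le (hiso : ∀ S : Set (Opens X), IsOpen[τ] S → OpenlyIsotone S)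
    {O A : Opens X} (hOA : O ≤ A) : O ∈ @closure _ τ {A} :=
  (@mem_closure_iff _ τ _ _).2 fun S hS hOS => ⟨A, hiso S hS hOS hOA, rfl⟩

end

/-- If `τ` is a topology on the hyperspace `C(X,$)` of open subsets of `X` whose open sets
are all openly isotone and for which every family `𝒪(x)` is open (i.e. `p(X,$) ≤ τ ≤ [X,$]`),
then the `τ`-closure of a singleton `{A}` is the set of open sets included in `A`. -/
theorem closure_singleton_eq {X : Type*} [TopologicalSpace X]
    (τ : TopologicalSpace (Opens X))
    (hiso : ∀ S : Set (Opens X), IsOpen[τ] S → OpenlyIsotone S)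
    (hp : ∀ x : X, IsOpen[τ] {U : Opens X | x ∈ U}) :
    ∀ A : Opens X, @closure _ τ {A} = {O : Opens X | O ≤ A} := fun A =>
  subset_antisymm
    (@closure_minimal _ τ _ _ (Set.singleton_subset_iff.2 (le_refl A))
      (isClosed_setOf_le_of_isOpen_setOf_mem τ hp A))
    fun _ hOA => mem_closure_singleton_of_le τ hiso hOA
end

section
/- Let X be a nonempty topological space and let τ be a topology on C(X,$) such that every τ-open subset of C(X,$) is openly isotone and, for every x ∈ X, the family 𝒪(x) := {U ∈ C(X,$) : x ∈ U} is τ-open. Then the topological space (C(X,$), τ) is T₀ but is not T₁. -/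
/-!
Points of `X` separate the open sets, so the `τ`-open families `𝒪(x)` already make
`C(X,$)` a `T₀` space. On the other hand, every `τ`-open family is an upper set, so every
neighbourhood of `∅` contains `X`: `∅` lies in the closure of `{X}`, and as `∅ ≠ X`,
the point `{X}` is not closed.
-/

open TopologicalSpace Topology

theorem T0Space.of_separating_isOpen {α ι : Type*} [TopologicalSpace α] (s : ι → Set α)
    (hs : ∀ i, IsOpen (s i)) (hsep : ∀ a b : α, (∀ i, a ∈ s i ↔ b ∈ s i) → a = b) :
    T0Space α :=
  ⟨fun a b h => hsep a b fun i => inseparable_iff_forall_isOpen.1 h _ (hs i)⟩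

theorem specializes_of_le_of_forall_isOpen_isUpperSet {α : Type*} [Preorder α]
    [TopologicalSpace α] (h : ∀ s : Set α, IsOpen s → IsUpperSet s) {a b : α} (hab : a ≤ b) :
    b ⤳ a :=
  specializes_iff_forall_open.2 fun s hs ha => h s hs hab ha

theorem not_t1Space_of_forall_isOpen_isUpperSet {α : Type*} [PartialOrder α]
    [TopologicalSpace α] (h : ∀ s : Set α, IsOpen s → IsUpperSet s) {a b : α} (hab : a < b) :
    ¬ T1Space α := fun _ =>
  hab.ne (specializes_of_le_of_forall_isOpen_isUpperSet h hab.le).eq.symm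

theorem OpenlyIsotone.isUpperSet {X : Type*} [TopologicalSpace X] {A : Set (Opens X)}
    (hA : OpenlyIsotone A) : IsUpperSet A :=
  fun _ _ hUV hU => hA hU hUV

/-- If `X` is nonempty and `τ` is a topology on `C(X,$)` whose open sets are all openly
isotone and such that every `𝒪(x)` is `τ`-open (i.e. `p(X,$) ≤ τ ≤ [X,$]`), then
`(C(X,$), τ)` is `T₀` but not `T₁`. -/
theorem t0_not_t1 {X : Type*} [TopologicalSpace X] [Nonempty X]
    (τ : TopologicalSpace (Opens X))
    (hiso : ∀ S : Set (Opens X), IsOpen[τ] S → OpenlyIsotone S)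
    (hp : ∀ x : X, IsOpen[τ] {U : Opens X | x ∈ U}) :
    @T0Space (Opens X) τ ∧ ¬ @T1Space (Opens X) τ := by
  let _ := τ
  exact ⟨T0Space.of_separating_isOpen _ hp fun _ _ => Opens.ext ∘ Set.ext,
    not_t1Space_of_forall_isOpen_isUpperSet (fun S hS => (hiso S hS).isUpperSet) bot_lt_top⟩
end

section
/- Let X be a topological space and let τ be a topology on C(X,$) in which every τ-open set is openly isotone. Let 𝒫 be an ideal subbase consisting of open subsets of X. Then the τ-closure of 𝒫 (as a subset of C(X,$)) equals the set of τ-limits of the filter 𝒪^♮(𝒫), that is, cl_τ(𝒫) = {U ∈ C(X,$) : 𝒪^♮(𝒫) is finer than the τ-neighborhood filter of U}. -/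
/-!
If every open set is upward closed, then an open set `o` meets `Pfam` iff it contains a whole
principal upper set `Ici P` with `P ∈ Pfam`. When `Pfam` is directed and nonempty these upper sets
form a basis of `𝒪^♮(Pfam)`, so "every open neighbourhood of `U` meets `Pfam`" and
"every open neighbourhood of `U` belongs to `𝒪^♮(Pfam)`" are the same condition.
-/

open TopologicalSpace Topology

open Filter Set

section Preorder

variable {α : Type*} [Preorder α] {A : Set α}

lemma IsUpperSet.exists_mem_iff_exists_Ici_subset {o : Set α} (ho : IsUpperSet o) :
    (∃ P ∈ A, P ∈ o) ↔ ∃ P ∈ A, Ici P ⊆ o :=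
  ⟨fun ⟨P, hPA, hPo⟩ => ⟨P, hPA, ho.Ici_subset hPo⟩,
    fun ⟨P, hPA, hPo⟩ => ⟨P, hPA, hPo le_rfl⟩⟩

lemma generate_setOf_eq_Ici_eq_biInf (A : Set α) :
    generate {S | ∃ P ∈ A, S = Ici P} = ⨅ P ∈ A, 𝓟 (Ici P) := by
  have : {S | ∃ P ∈ A, S = Ici P} = Ici '' A := by
    ext S
    simp only [mem_ofPred_eq, mem_image, eq_comm]
  rw [generate_eq_biInf, this, iInf_image]

lemma hasBasis_generate_setOf_eq_Ici (hd : DirectedOn (· ≤ ·) A) (hne : A.Nonempty) :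
    (generate {S | ∃ P ∈ A, S = Ici P}).HasBasis (· ∈ A) Ici := by
  rw [generate_setOf_eq_Ici_eq_biInf]
  exact hasBasis_biInf_principal (hd.mono fun _ _ h => Ici_subset_Ici.mpr h) hne

theorem closure_eq_setOf_generate_Ici_le_nhds [TopologicalSpace α]
    (hopen : ∀ s : Set α, IsOpen s → IsUpperSet s) (hd : DirectedOn (· ≤ ·) A)
    (hne : A.Nonempty) :
    closure A = {U | generate {S | ∃ P ∈ A, S = Ici P} ≤ 𝓝 U} := by
  ext U
  rw [mem_ofPred_eq, mem_closure_iff_nhds_basis (nhds_basis_opens U),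
    (hasBasis_generate_setOf_eq_Ici hd hne).le_basis_iff (nhds_basis_opens U)]
  exact forall₂_congr fun o ho => (hopen o ho.2).exists_mem_iff_exists_Ici_subset

end Preorder

namespace TopologicalSpace.Opens

variable {X : Type*} [TopologicalSpace X] {A : Set (Opens X)}

lemma directedOn_of_forall_finite_biUnion_subset
    (hA : ∀ P0 ⊆ A, P0.Finite → ∃ P ∈ A, (⋃ Q ∈ P0, (Q : Set X)) ⊆ P) :
    DirectedOn (· ≤ ·) A := by
  intro a ha b hb
  obtain ⟨P, hPA, hP⟩ := hA {a, b} (pair_subset ha hb) (toFinite _)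
  rw [iUnion₂_subset_iff] at hP
  exact ⟨P, hPA, hP a (mem_insert a _), hP b (mem_insert_of_mem a rfl)⟩

lemma nonempty_of_forall_finite_biUnion_subset
    (hA : ∀ P0 ⊆ A, P0.Finite → ∃ P ∈ A, (⋃ Q ∈ P0, (Q : Set X)) ⊆ P) :
    A.Nonempty :=
  let ⟨P, hPA, _⟩ := hA ∅ (empty_subset A) finite_empty
  ⟨P, hPA⟩

end TopologicalSpace.Opens

/-- For an upper regular topology `τ` on `C(X,$)` (all `τ`-open sets are openly isotone)
and an ideal subbase `Pfam` of open sets, the `τ`-closure of `Pfam` equals the set of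
`τ`-limits of the filter `𝒪^♮(Pfam)`. -/
theorem closure_idealSubbase_eq_lim {X : Type*} [TopologicalSpace X]
    (τ : TopologicalSpace (Opens X))
    (hiso : ∀ S : Set (Opens X), IsOpen[τ] S → OpenlyIsotone S)
    (Pfam : Set (Opens X))
    (hP : ∀ P0 ⊆ Pfam, P0.Finite → ∃ P ∈ Pfam, (⋃ Q ∈ P0, (Q : Set X)) ⊆ (P : Set X)) :
    @closure _ τ Pfam =
      {U : Opens X |
        Filter.generate {S : Set (Opens X) | ∃ P ∈ Pfam, S = {V : Opens X | P ≤ V}} ≤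
          @nhds _ τ U} :=
  @closure_eq_setOf_generate_Ici_le_nhds _ _ _ τ (fun S hS _ _ hUV hU => hiso S hS hU hUV)
    (Opens.directedOn_of_forall_finite_biUnion_subset hP)
    (Opens.nonempty_of_forall_finite_biUnion_subset hP)
end

section
/- Let X be a topological space and let τ be a topology on C(X,$) such that every τ-open set is a compact family and, for every x ∈ X, the family 𝒪(x) := {U ∈ C(X,$) : x ∈ U} is τ-open. Then for every ideal subbase 𝒫 of open subsets of X and every U ∈ C(X,$): U belongs to the τ-closure of 𝒫 if and only if 𝒫 is a cover of U, i.e. U ⊆ ⋃𝒫. -/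
open TopologicalSpace Topology

/-- A family of open sets is a *compact family* if it is openly isotone and whenever the
union of a collection of open sets belongs to it, the union of some finite subcollection
already belongs to it. -/
def CompactFamily {X : Type*} [TopologicalSpace X] (A : Set (Opens X)) : Prop :=
  OpenlyIsotone A ∧
    ∀ B : Set (Opens X), sSup B ∈ A → ∃ S ⊆ B, S.Finite ∧ sSup S ∈ A

/-!
A point `x ∈ U` gives the `τ`-open neighbourhood `𝒪(x)` of `U`, which must meet `𝒫`; hence
closure points of `𝒫` are covered by `𝒫`. Conversely, if `U ⊆ ⋃𝒫` then every `τ`-open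
`A ∋ U` contains `⋃𝒫` by isotony, hence a finite union of members of `𝒫` by compactness,
hence a single member of `𝒫` because `𝒫` is an ideal subbase.
-/

namespace TopologicalSpace.Opens

variable {X : Type*} [TopologicalSpace X]

def IsIdealSubbase (Ps : Set (Opens X)) : Prop :=
  ∀ P0 ⊆ Ps, P0.Finite → ∃ P ∈ Ps, (⋃ Q ∈ P0, (Q : Set X)) ⊆ (P : Set X)

theorem coe_subset_biUnion_iff_le_sSup {U : Opens X} {Ps : Set (Opens X)} :
    (U : Set X) ⊆ ⋃ P ∈ Ps, (P : Set X) ↔ U ≤ sSup Ps := by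
  rw [← coe_sSup, SetLike.coe_subset_coe]

theorem IsIdealSubbase.exists_mem_of_sSup_mem {Ps A : Set (Opens X)} (hPs : IsIdealSubbase Ps)
    (hA : CompactFamily A) (hsup : sSup Ps ∈ A) : ∃ P ∈ Ps, P ∈ A := by
  obtain ⟨hiso, hfin⟩ := hA
  obtain ⟨Ps₀, hPs₀, hPs₀_fin, hsup₀⟩ := hfin Ps hsup
  obtain ⟨P, hP, hP₀⟩ := hPs Ps₀ hPs₀ hPs₀_fin
  exact ⟨P, hP, hiso hsup₀ (by rwa [← SetLike.coe_subset_coe, coe_sSup])⟩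

theorem le_sSup_of_mem_closure (τ : TopologicalSpace (Opens X))
    (hp : ∀ x : X, IsOpen[τ] {U : Opens X | x ∈ U}) {Ps : Set (Opens X)} {U : Opens X}
    (hU : U ∈ closure[τ] Ps) : U ≤ sSup Ps := by
  intro x hx
  obtain ⟨P, hxP, hP⟩ := (@mem_closure_iff _ τ _ _).mp hU _ (hp x) hx
  exact mem_sSup.mpr ⟨P, hP, hxP⟩

theorem mem_closure_of_le_sSup (τ : TopologicalSpace (Opens X))
    (hcpt : ∀ S : Set (Opens X), IsOpen[τ] S → CompactFamily S) {Ps : Set (Opens X)}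
    (hPs : IsIdealSubbase Ps) {U : Opens X} (hU : U ≤ sSup Ps) : U ∈ closure[τ] Ps := by
  refine (@mem_closure_iff _ τ _ _).mpr fun A hA hUA => ?_
  obtain ⟨P, hP, hPA⟩ := hPs.exists_mem_of_sSup_mem (hcpt A hA) ((hcpt A hA).1 hUA hU)
  exact ⟨P, hPA, hP⟩

end TopologicalSpace.Opens

open TopologicalSpace.Opens in
/-- If `τ` is a topology on `C(X,$)` all of whose open sets are compact families and for
which every `𝒪(x)` is open (i.e. `p(X,$) ≤ τ ≤ [X,$]`), then for every ideal subbase `Pfam`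
of open sets and every open `U`, `U` is in the `τ`-closure of `Pfam` iff `Pfam` covers `U`. -/
theorem mem_closure_iff_cover {X : Type*} [TopologicalSpace X]
    (τ : TopologicalSpace (Opens X))
    (hcpt : ∀ S : Set (Opens X), IsOpen[τ] S → CompactFamily S)
    (hp : ∀ x : X, IsOpen[τ] {U : Opens X | x ∈ U}) :
    ∀ Pfam : Set (Opens X),
      (∀ P0 ⊆ Pfam, P0.Finite → ∃ P ∈ Pfam, (⋃ Q ∈ P0, (Q : Set X)) ⊆ (P : Set X)) →
      ∀ U : Opens X, U ∈ @closure _ τ Pfam ↔ (U : Set X) ⊆ ⋃ P ∈ Pfam, (P : Set X) := by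
  intro Pfam hideal U
  rw [coe_subset_biUnion_iff_le_sSup]
  exact ⟨le_sSup_of_mem_closure τ hp, mem_closure_of_le_sSup τ hcpt hideal⟩
end

section
/- Let X be a topological space, let τ be a topology on C(X,$) whose open sets are all openly isotone, and let α be a filter on C(X,$) admitting a base of openly isotone families. If α converges to X (the whole space, as an element of C(X,$)) in τ, then the erected filter [α,𝒩(0)], generated by the sets [𝒜,Wₙ] for 𝒜 ∈ α and n ≥ 1, converges to the zero function 0̄ in the topology τ^⇑ on C(X,ℝ). -/
open TopologicalSpace Topology

/-- The preimage of an open set under a continuous map, as an open set. -/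
def preim {X Z : Type*} [TopologicalSpace X] [TopologicalSpace Z]
    (f : C(X, Z)) (U : Opens Z) : Opens X :=
  ⟨f ⁻¹' U, U.isOpen.preimage f.continuous⟩

/-- The basic open neighborhood `Wₙ = (-1/n, 1/n)` of `0` in `ℝ`. -/
def Wball (n : ℕ) : Opens ℝ :=
  ⟨Set.Ioo (-(1 / (n : ℝ))) (1 / (n : ℝ)), isOpen_Ioo⟩

/-- The topology `τ^⇑` on `C(X,ℝ)`: the initial topology induced by the maps
`f ↦ f⁻¹(U)` into `(C(X,$), τ)`, `U` ranging over open subsets of `ℝ`. -/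
def upTop {X : Type*} [TopologicalSpace X] (τ : TopologicalSpace (Opens X)) :
    TopologicalSpace C(X, ℝ) :=
  ⨅ U : Opens ℝ, TopologicalSpace.induced (fun f : C(X, ℝ) => preim f U) τ

open Filter

/-! Convergence in `τ^⇑` is tested one open `U ⊆ ℝ` at a time, along `f ↦ f⁻¹(U)`. At the
zero function this map takes the value `X` when `0 ∈ U` and `∅` otherwise. Every `τ`-open set
containing `∅` is, being openly isotone, everything, so the second case is trivial. In the first
case some `Wₙ` lies in `U`, and for an openly isotone `𝒜 ∈ α` inside a `τ`-neighbourhood `S` of `X`,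
`f⁻¹(Wₙ) ∈ 𝒜` forces `f⁻¹(U) ∈ 𝒜 ⊆ S`. -/

theorem preim_mono {X Z : Type*} [TopologicalSpace X] [TopologicalSpace Z] (f : C(X, Z))
    {U V : Opens Z} (h : U ≤ V) : preim f U ≤ preim f V :=
  fun _ hx => h hx

theorem preim_const_of_mem {X Z : Type*} [TopologicalSpace X] [TopologicalSpace Z] {z : Z}
    {U : Opens Z} (h : z ∈ U) : preim (ContinuousMap.const X z) U = ⊤ :=
  Opens.ext <| Set.eq_univ_of_forall fun _ => h

theorem preim_const_of_notMem {X Z : Type*} [TopologicalSpace X] [TopologicalSpace Z] {z : Z}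
    {U : Opens Z} (h : z ∉ U) : preim (ContinuousMap.const X z) U = ⊥ :=
  Opens.ext <| Set.eq_empty_of_forall_notMem fun _ hx => h hx

theorem exists_Wball_le {U : Opens ℝ} (h : (0 : ℝ) ∈ U) : ∃ n, 1 ≤ n ∧ Wball n ≤ U := by
  obtain ⟨ε, hε, hball⟩ := Metric.isOpen_iff.mp U.isOpen 0 h
  obtain ⟨n, hn⟩ := exists_nat_one_div_lt hε
  refine ⟨n + 1, n.succ_pos, fun x hx => hball ?_⟩
  have hx' : |x| < 1 / ((n + 1 : ℕ) : ℝ) := abs_lt.mpr hx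
  rw [Metric.mem_ball, Real.dist_0_eq_abs]
  exact hx'.trans (by exact_mod_cast hn)

theorem nhds_bot_eq_top {X : Type*} [TopologicalSpace X] {τ : TopologicalSpace (Opens X)}
    (hiso : ∀ S : Set (Opens X), IsOpen[τ] S → OpenlyIsotone S) :
    @nhds _ τ (⊥ : Opens X) = ⊤ :=
  top_unique <| (@nhds_basis_opens _ τ ⊥).ge_iff.mpr fun S ⟨hbot, hS⟩ =>
    univ_mem' fun _ => hiso S hS hbot bot_le

theorem le_nhds_upTop_iff {X : Type*} [TopologicalSpace X] {τ : TopologicalSpace (Opens X)}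
    {l : Filter C(X, ℝ)} {f : C(X, ℝ)} :
    l ≤ @nhds _ (upTop τ) f ↔
      ∀ U : Opens ℝ, Tendsto (fun g : C(X, ℝ) => preim g U) l (@nhds _ τ (preim f U)) := by
  rw [upTop, nhds_iInf, le_iInf_iff]
  simp only [nhds_induced, tendsto_iff_comap]

/-- If a filter `α` on `C(X,$)` with a base of openly isotone families converges to `X`
in `τ`, then its erected filter `[α,𝒩(0)]`, generated by the sets `[𝒜,Wₙ]` (`𝒜 ∈ α`,
`n ≥ 1`), converges to the zero function in `τ^⇑`. -/
theorem erected_tendsto_zero {X : Type*} [TopologicalSpace X]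
    (τ : TopologicalSpace (Opens X))
    (hiso : ∀ S : Set (Opens X), IsOpen[τ] S → OpenlyIsotone S)
    (α : Filter (Opens X))
    (hbase : ∀ S ∈ α, ∃ A ∈ α, A ⊆ S ∧ OpenlyIsotone A)
    (hconv : α ≤ @nhds _ τ (⊤ : Opens X)) :
    Filter.generate
        {S : Set C(X, ℝ) |
          ∃ n, 1 ≤ n ∧ ∃ A ∈ α, S = {f : C(X, ℝ) | preim f (Wball n) ∈ A}} ≤
      @nhds _ (upTop τ) (0 : C(X, ℝ)) := by
  refine le_nhds_upTop_iff.mpr fun U => ?_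
  by_cases h0 : (0 : ℝ) ∈ U
  · rw [← ContinuousMap.const_zero, preim_const_of_mem h0]
    obtain ⟨n, hn, hWU⟩ := exists_Wball_le h0
    refine tendsto_nhds.mpr fun S hS hmem => ?_
    obtain ⟨A, hAα, hAS, hAiso⟩ := hbase S (hconv (hS.mem_nhds hmem))
    exact mem_of_superset (mem_generate_of_mem ⟨n, hn, A, hAα, rfl⟩)
      fun f hf => hAS (hAiso hf (preim_mono f hWU))
  · rw [← ContinuousMap.const_zero, preim_const_of_notMem h0, nhds_bot_eq_top hiso]
    exact tendsto_top
end

section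
/- Let X be a completely regular Hausdorff topological space and let C_p(X,ℝ) denote the set of continuous real-valued functions on X with the topology of pointwise convergence (the topology induced from the product topology on ℝ^X). Then C_p(X,ℝ) is countably tight (for every point f and every set S with f in the closure of S, there is a countable T ⊆ S with f in the closure of T) if and only if Xⁿ is Lindelöf for every n ∈ ℕ. -/
open TopologicalSpace Topology

/-- The topology of pointwise convergence on `C(X,ℝ)`, induced from the product topology
on `ℝ^X`. -/
def pointwiseTop (X : Type*) [TopologicalSpace X] : TopologicalSpace C(X, ℝ) :=
  TopologicalSpace.induced (fun f : C(X, ℝ) => (f : X → ℝ)) Pi.topologicalSpace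

/-!
A point `f` lies in the pointwise closure of `S` iff for every `n` and `ε > 0` the open sets
`{x ∈ Xⁿ | ∀ i, |g xᵢ - f xᵢ| < ε}`, `g ∈ S`, cover `Xⁿ`. If every `Xⁿ` is Lindelöf, countably
many `g` suffice for each `n` and each `ε = 1 / (k + 1)`, and together they witness countable
tightness at `f`.

Conversely, given an open cover `𝒰` of `Xⁿ`, let `S` be the set of those `g` for which the `n`-th
power of the cozero set of `g` is covered by finitely many members of `𝒰`. For finite `F ⊆ X` the
finite set `Fⁿ` has a neighbourhood of the form `Vⁿ` inside a finite union of members of `𝒰`, and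
complete regularity gives `g` equal to `1` on `F` with cozero set in `V`; so `1` lies in the
closure of `S`. A countable `T ⊆ S` with `1` in its closure yields a countable subcover, because
every point of `Xⁿ` is in the `n`-th power of the cozero set of some `g ∈ T`.
-/

open Set Function

section

variable {X : Type*} [TopologicalSpace X]

theorem mem_closure_pointwiseTop_iff {f : C(X, ℝ)} {S : Set C(X, ℝ)} :
    f ∈ @closure _ (pointwiseTop X) S ↔
      ∀ (n : ℕ) (p : Fin n → X) (ε : ℝ), 0 < ε → ∃ g ∈ S, ∀ i, dist (g (p i)) (f (p i)) < ε := by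
  constructor
  · intro hf n p ε hε
    rw [pointwiseTop, closure_induced] at hf
    have hcont : Continuous fun h : X → ℝ => h ∘ p := continuous_pi fun i => continuous_apply (p i)
    obtain ⟨_, ⟨_, ⟨g, hgS, rfl⟩, rfl⟩, hg⟩ :=
      Metric.mem_closure_iff.1 (mem_closure_image hcont.continuousAt hf) ε hε
    exact ⟨g, hgS, (dist_pi_lt_iff hε).1 (dist_comm (⇑f ∘ p) _ ▸ hg)⟩
  · intro h
    rw [pointwiseTop, closure_induced, mem_closure_iff_nhds]
    intro t ht
    rw [nhds_pi, Filter.mem_pi] at ht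
    obtain ⟨I, hI, u, hu, hIu⟩ := ht
    obtain ⟨n, p, -, rfl⟩ := hI.fin_param
    have hbox : univ.pi (fun i => u (p i)) ∈ 𝓝 (⇑f ∘ p) :=
      set_pi_mem_nhds finite_univ fun i _ => hu (p i)
    obtain ⟨ε, hε, hball⟩ := Metric.mem_nhds_iff.1 hbox
    obtain ⟨g, hgS, hg⟩ := h n p ε hε
    refine ⟨g, hIu ?_, g, hgS, rfl⟩
    rintro _ ⟨i, rfl⟩
    exact hball ((dist_pi_lt_iff hε).2 hg) i (mem_univ i)

theorem exists_isOpen_superset_pi_subset {ι : Type*} [Finite ι] {F : Finset X}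
    {O : Set (ι → X)} (hO : IsOpen O) (hFO : univ.pi (fun _ => (F : Set X)) ⊆ O) :
    ∃ V, IsOpen V ∧ ↑F ⊆ V ∧ univ.pi (fun _ => V) ⊆ O := by
  have hbox : ∀ x : ι → F, ∃ u : ι → Set X,
      (∀ i, IsOpen (u i) ∧ (x i : X) ∈ u i) ∧ univ.pi u ⊆ O :=
    fun x => isOpen_pi_iff'.1 hO _ (hFO fun i _ => (x i).2)
  choose u hu huO using hbox
  -- If `z i ∈ W (y i)` for all `i`, then `z` lies in the box `univ.pi (u y)` around `y`.
  let W : F → Set X := fun y => ⋂ (x : ι → F) (i : ι) (_ : x i = y), u x i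
  refine ⟨⋃ y, W y, isOpen_iUnion fun y => ?_, fun y hy => mem_iUnion.2 ⟨⟨y, hy⟩, ?_⟩, ?_⟩
  · exact isOpen_iInter_of_finite fun x => isOpen_iInter_of_finite fun i =>
      isOpen_iInter_of_finite fun _ => (hu x i).1
  · simp only [W, mem_iInter]
    intro x i hxi
    simpa [hxi] using (hu x i).2
  · intro z hz
    choose y hy using fun i => mem_iUnion.1 (hz i (mem_univ i))
    exact huO y fun i _ => mem_iInter.1 (mem_iInter₂.1 (hy i) y i) rfl

theorem exists_eqOn_one_support_subset [CompletelyRegularSpace X] {F : Finset X} {V : Set X}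
    (hV : IsOpen V) (hFV : ↑F ⊆ V) :
    ∃ g : C(X, ℝ), EqOn g 1 F ∧ support g ⊆ V := by
  choose h hh h0 h1 using fun y : F =>
    CompletelyRegularSpace.completely_regular_isOpen (y : X) V hV (hFV y.2)
  -- `1 - ∏ y, h y` is `1` on `F`, where one factor vanishes, and `0` off `V`, where all are `1`.
  refine ⟨⟨fun x => 1 - ∏ y, (h y x : ℝ), by fun_prop⟩, fun x hx => ?_, fun x hx => ?_⟩
  · have hx0 : (h ⟨x, hx⟩ x : ℝ) = 0 := by simpa using congrArg Subtype.val (h0 ⟨x, hx⟩)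
    simp only [ContinuousMap.coe_mk, Pi.one_apply]
    rw [Finset.prod_eq_zero (f := fun y => (h y x : ℝ)) (Finset.mem_univ _) hx0, sub_zero]
  · by_contra hxV
    simp [Finset.prod_eq_one fun y _ => congrArg Subtype.val (h1 y hxV)] at hx

theorem one_mem_closure_of_iUnion_eq_univ [CompletelyRegularSpace X] {n : ℕ} {ι : Type*}
    {U : ι → Set (Fin n → X)} (hU : ∀ j, IsOpen (U j)) (hcov : ⋃ j, U j = univ) :
    (1 : C(X, ℝ)) ∈ @closure _ (pointwiseTop X)
      {g | ∃ J : Finset ι, univ.pi (fun _ => support g) ⊆ ⋃ j ∈ J, U j} := by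
  classical
  refine mem_closure_pointwiseTop_iff.2 fun m p ε hε => ?_
  let F := Finset.univ.image p
  obtain ⟨J, hJ⟩ := (isCompact_univ_pi fun _ => F.finite_toSet.isCompact).elim_finite_subcover
    U hU (hcov ▸ subset_univ _)
  obtain ⟨V, hV, hFV, hVJ⟩ := exists_isOpen_superset_pi_subset (isOpen_biUnion fun j _ => hU j) hJ
  obtain ⟨g, hg1, hgV⟩ := exists_eqOn_one_support_subset hV hFV
  refine ⟨g, ⟨J, (pi_mono fun _ _ => hgV).trans hVJ⟩, fun i => ?_⟩
  simpa [hg1 (by simp [F] : p i ∈ F)] using hε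

theorem lindelofSpace_pi_of_one_mem_closure [CompletelyRegularSpace X]
    (ht : ∀ S : Set C(X, ℝ), 1 ∈ @closure _ (pointwiseTop X) S →
      ∃ T ⊆ S, T.Countable ∧ 1 ∈ @closure _ (pointwiseTop X) T)
    (n : ℕ) : LindelofSpace (Fin n → X) := by
  refine ⟨isLindelof_of_countable_subcover fun U hU hcov => ?_⟩
  obtain ⟨T, hTS, hTc, hT⟩ := ht _ (one_mem_closure_of_iUnion_eq_univ hU (univ_subset_iff.1 hcov))
  choose! J hJ using fun g (hg : g ∈ T) => hTS hg
  refine ⟨⋃ g ∈ T, ↑(J g), hTc.biUnion fun g _ => (J g).countable_toSet, fun x _ => ?_⟩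
  obtain ⟨g, hgT, hg⟩ := mem_closure_pointwiseTop_iff.1 hT n x 1 one_pos
  have hx : x ∈ univ.pi (fun _ => support g) := fun i _ hgx => by
    simpa [hgx] using hg i
  obtain ⟨j, hj, hxj⟩ := mem_iUnion₂.1 (hJ g hgT hx)
  exact mem_iUnion₂.2 ⟨j, mem_iUnion₂.2 ⟨g, hgT, hj⟩, hxj⟩

theorem exists_countable_subset_mem_closure_of_lindelofSpace_pi
    (hL : ∀ n : ℕ, LindelofSpace (Fin n → X)) {f : C(X, ℝ)} {S : Set C(X, ℝ)}
    (hf : f ∈ @closure _ (pointwiseTop X) S) :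
    ∃ T ⊆ S, T.Countable ∧ f ∈ @closure _ (pointwiseTop X) T := by
  have hcover : ∀ (n k : ℕ), ∃ T ⊆ S, T.Countable ∧
      ∀ p : Fin n → X, ∃ g ∈ T, ∀ i, dist (g (p i)) (f (p i)) < 1 / (k + 1) := by
    intro n k
    let close (g : C(X, ℝ)) : Set (Fin n → X) :=
      {p | ∀ i, dist (g (p i)) (f (p i)) < 1 / (k + 1)}
    have hopen : ∀ g ∈ S, IsOpen (close g) := fun g _ => by
      simp only [close, ofPred_forall]
      exact isOpen_iInter_of_finite fun i => isOpen_lt (by fun_prop) continuous_const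
    have hcov : univ ⊆ ⋃ g ∈ S, close g := fun p _ => by
      obtain ⟨g, hgS, hg⟩ := mem_closure_pointwiseTop_iff.1 hf n p _ Nat.one_div_pos_of_nat
      exact mem_iUnion₂.2 ⟨g, hgS, hg⟩
    obtain ⟨T, hTS, hTc, hT⟩ := isLindelof_univ.elim_countable_subcover_image hopen hcov
    refine ⟨T, hTS, hTc, fun p => ?_⟩
    obtain ⟨g, hgT, hg⟩ := mem_iUnion₂.1 (hT (mem_univ p))
    exact ⟨g, hgT, hg⟩
  choose T hTS hTc hT using hcover
  refine ⟨⋃ (n) (k), T n k, iUnion₂_subset hTS, countable_iUnion fun n => countable_iUnion (hTc n),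
    mem_closure_pointwiseTop_iff.2 fun n p ε hε => ?_⟩
  obtain ⟨k, hk⟩ := exists_nat_one_div_lt hε
  obtain ⟨g, hgT, hg⟩ := hT n k p
  exact ⟨g, mem_iUnion₂.2 ⟨n, k, hgT⟩, fun i => (hg i).trans hk⟩

end

/-- For a completely regular Hausdorff space `X`, `C_p(X,ℝ)` is countably tight if and
only if `Xⁿ` is Lindelöf for every `n`. -/
theorem cp_countablyTight_iff_lindelof {X : Type*} [TopologicalSpace X] [T35Space X] :
    (∀ (f : C(X, ℝ)) (S : Set C(X, ℝ)), f ∈ @closure _ (pointwiseTop X) S →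
        ∃ T ⊆ S, T.Countable ∧ f ∈ @closure _ (pointwiseTop X) T) ↔
      ∀ n : ℕ, LindelofSpace (Fin n → X) :=
  ⟨fun ht => lindelofSpace_pi_of_one_mem_closure (ht 1),
    fun hL _ _ => exists_countable_subset_mem_closure_of_lindelofSpace_pi hL⟩
end

section
/- Let X be a completely regular Hausdorff topological space and let C_k(X,ℝ) denote the set of continuous real-valued functions on X with the compact-open topology. Then C_k(X,ℝ) is countably tight if and only if every open k-cover of X has a countable k-subcover, where an open k-cover of X is a family of open subsets of X such that every compact subset of X is contained in some member of the family. -/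
open Topology Set

/-! Near `0`, the compact-open topology of `C(X, ℝ)` is described by the families of sublevel
sets `{x | |g x| < ε}`, `g ∈ S`: `0 ∈ closure S` exactly when each of these families is a
`k`-cover. So a countable `k`-subcover of each such family, for `ε = 1/(n+1)`, yields a countable
`T ⊆ S` with `0 ∈ closure T`. Conversely, an open `k`-cover `𝒰` is encoded by the functions that
are `1` off some `P ∈ 𝒰`; complete regularity puts `0` in their closure, and a countable set of
them accumulating at `0` picks out countably many members of `𝒰` that still form a `k`-cover.
Translations reduce tightness at an arbitrary point to tightness at `0`. -/

lemma Set.exists_countable_subset_image_eq {α β : Type*} {f : α → β} {s : Set α} {t : Set β}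
    (hts : t ⊆ f '' s) (ht : t.Countable) : ∃ u ⊆ s, u.Countable ∧ f '' u = t := by
  obtain ⟨u, hus, rfl⟩ := subset_image_iff.1 hts
  obtain ⟨v, hvu, hv⟩ := exists_subset_bijOn u f
  exact ⟨v, hvu.trans hus, countable_of_injective_of_countable_image hv.injOn (hv.image_eq ▸ ht),
    hv.image_eq⟩

lemma exists_countable_mem_closure_of_zero {G : Type*} [TopologicalSpace G] [AddGroup G]
    [ContinuousAdd G] (h : ∀ S : Set G, 0 ∈ closure S → ∃ T ⊆ S, T.Countable ∧ 0 ∈ closure T)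
    {f : G} {S : Set G} (hf : f ∈ closure S) : ∃ T ⊆ S, T.Countable ∧ f ∈ closure T := by
  have h0 : (0 : G) ∈ closure ((· + f) ⁻¹' S) := by
    rw [← Homeomorph.coe_addRight, ← Homeomorph.preimage_closure]
    simpa using hf
  obtain ⟨T, hTS, hTc, hT⟩ := h _ h0
  refine ⟨(· + f) '' T, image_subset_iff.2 hTS, hTc.image _, ?_⟩
  rw [← Homeomorph.coe_addRight, ← Homeomorph.image_closure]
  exact ⟨0, hT, zero_add f⟩

section KCover

variable {X : Type*} [TopologicalSpace X]

def IsKCover (𝒰 : Set (Set X)) : Prop :=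
  ∀ K : Set X, IsCompact K → ∃ P ∈ 𝒰, K ⊆ P

lemma IsKCover.of_refinement {𝒰 𝒱 : Set (Set X)} (h𝒰 : IsKCover 𝒰)
    (h : ∀ P ∈ 𝒰, ∃ Q ∈ 𝒱, P ⊆ Q) : IsKCover 𝒱 := by
  intro K hK
  obtain ⟨P, hP, hKP⟩ := h𝒰 K hK
  obtain ⟨Q, hQ, hPQ⟩ := h P hP
  exact ⟨Q, hQ, hKP.trans hPQ⟩

lemma exists_continuousMap_eqOn_zero_of_isCompact [CompletelyRegularSpace X] {K P : Set X}
    (hK : IsCompact K) (hP : IsOpen P) (hKP : K ⊆ P) :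
    ∃ f : C(X, ℝ), EqOn f 0 K ∧ EqOn f 1 Pᶜ := by
  refine hK.induction_on (p := fun s => ∃ f : C(X, ℝ), EqOn f 0 s ∧ EqOn f 1 Pᶜ)
    ⟨1, eqOn_empty _ _, fun _ _ => rfl⟩ ?_ ?_ ?_
  · exact fun s t hst ht => ht.imp fun f hf => ⟨hf.1.mono hst, hf.2⟩
  · rintro s t ⟨f, hf0, hf1⟩ ⟨g, hg0, hg1⟩
    refine ⟨f * g, ?_, fun x hx => by simp [hf1 hx, hg1 hx]⟩
    rintro x (hx | hx)
    · simp [hf0 hx]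
    · simp [hg0 hx]
  · intro x hx
    obtain ⟨g, hg, hgx, hg1⟩ := CompletelyRegularSpace.completely_regular_isOpen x P hP (hKP hx)
    -- `g` vanishes at `x`; cutting it off below `1/2` makes it vanish near `x`.
    let f : C(X, ℝ) := ⟨fun y => max 0 (2 * g y - 1), by fun_prop⟩
    refine ⟨{y | (g y : ℝ) < 1 / 2}, mem_nhdsWithin_of_mem_nhds ?_, f, ?_, ?_⟩
    · exact (isOpen_lt (continuous_subtype_val.comp hg) continuous_const).mem_nhds
        (by simp [hgx])
    · intro y (hy : (g y : ℝ) < 1 / 2)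
      simp only [ContinuousMap.coe_mk, Pi.zero_apply, sup_eq_left, tsub_le_iff_right, zero_add, f]
      linarith
    · intro y hy
      simp only [ContinuousMap.coe_mk, hg1 hy, Pi.one_apply, Icc.coe_one, f]
      norm_num

end KCover

namespace ContinuousMap

variable {X : Type*} [TopologicalSpace X]

def sublevelCover (S : Set C(X, ℝ)) (ε : ℝ) : Set (Set X) :=
  (fun g : C(X, ℝ) => {x | |g x| < ε}) '' S

lemma isOpen_of_mem_sublevelCover {S : Set C(X, ℝ)} {ε : ℝ} :
    ∀ U ∈ sublevelCover S ε, IsOpen U := by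
  rintro _ ⟨g, -, rfl⟩
  exact isOpen_lt (by fun_prop) continuous_const

lemma hasBasis_nhds_zero_real :
    (𝓝 (0 : C(X, ℝ))).HasBasis (fun p : Set X × ℝ => IsCompact p.1 ∧ 0 < p.2)
      fun p => {g | ∀ x ∈ p.1, |g x| < p.2} := by
  simpa [UniformSpace.ball, Real.dist_eq] using nhds_basis_uniformity' (x := (0 : C(X, ℝ)))
    ((Metric.uniformity_basis_dist (α := ℝ)).compactConvergenceUniformity (α := X))

lemma zero_mem_closure_iff_isKCover {S : Set C(X, ℝ)} :
    (0 : C(X, ℝ)) ∈ closure S ↔ ∀ ε > 0, IsKCover (sublevelCover S ε) := by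
  simp only [mem_closure_iff_nhds_basis hasBasis_nhds_zero_real, mem_ofPred_eq, and_imp,
    Prod.forall, gt_iff_lt, IsKCover, sublevelCover, mem_image, subset_def,
    exists_exists_and_eq_and]
  exact ⟨fun h ε hε K hK => h K ε hK hε, fun h K ε hK hε => h ε hε K hK⟩

theorem exists_countable_zero_mem_closure
    (H : ∀ 𝒰 : Set (Set X), (∀ P ∈ 𝒰, IsOpen P) → IsKCover 𝒰 →
      ∃ 𝒱 ⊆ 𝒰, 𝒱.Countable ∧ IsKCover 𝒱)
    {S : Set C(X, ℝ)} (hS : 0 ∈ closure S) : ∃ T ⊆ S, T.Countable ∧ 0 ∈ closure T := by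
  have hcover := zero_mem_closure_iff_isKCover.1 hS
  have hstage : ∀ n : ℕ, ∃ T ⊆ S, T.Countable ∧ IsKCover (sublevelCover T (1 / (n + 1))) := by
    intro n
    obtain ⟨𝒱, h𝒱, h𝒱c, h𝒱k⟩ := H _ isOpen_of_mem_sublevelCover (hcover _ Nat.one_div_pos_of_nat)
    obtain ⟨T, hTS, hTc, rfl⟩ := exists_countable_subset_image_eq h𝒱 h𝒱c
    exact ⟨T, hTS, hTc, h𝒱k⟩
  choose T hTS hTc hT using hstage
  refine ⟨⋃ n, T n, iUnion_subset hTS, countable_iUnion hTc,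
    zero_mem_closure_iff_isKCover.2 fun ε hε => ?_⟩
  obtain ⟨n, hn⟩ := exists_nat_one_div_lt hε
  refine (hT n).of_refinement ?_
  rintro _ ⟨g, hg, rfl⟩
  exact ⟨_, ⟨g, mem_iUnion_of_mem n hg, rfl⟩, fun x hx => hx.trans hn⟩

theorem exists_countable_kSubcover [CompletelyRegularSpace X]
    (H : ∀ S : Set C(X, ℝ), 0 ∈ closure S → ∃ T ⊆ S, T.Countable ∧ 0 ∈ closure T)
    {𝒰 : Set (Set X)} (hopen : ∀ P ∈ 𝒰, IsOpen P) (h𝒰 : IsKCover 𝒰) :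
    ∃ 𝒱 ⊆ 𝒰, 𝒱.Countable ∧ IsKCover 𝒱 := by
  set S : Set C(X, ℝ) := {f | ∃ P ∈ 𝒰, EqOn f 1 Pᶜ}
  have hS : (0 : C(X, ℝ)) ∈ closure S := by
    refine zero_mem_closure_iff_isKCover.2 fun ε hε K hK => ?_
    obtain ⟨P, hP, hKP⟩ := h𝒰 K hK
    obtain ⟨f, hf0, hf1⟩ := exists_continuousMap_eqOn_zero_of_isCompact hK (hopen P hP) hKP
    exact ⟨_, ⟨f, ⟨P, hP, hf1⟩, rfl⟩, fun x hx => by simp [hf0 hx, hε]⟩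
  obtain ⟨T, hTS, hTc, hT⟩ := H S hS
  choose P hP hfP using fun f : T => hTS f.2
  have := hTc.to_subtype
  refine ⟨range P, range_subset_iff.2 hP, countable_range P,
    (zero_mem_closure_iff_isKCover.1 hT 1 one_pos).of_refinement ?_⟩
  rintro _ ⟨f, hf, rfl⟩
  refine ⟨P ⟨f, hf⟩, mem_range_self _, fun x hx => ?_⟩
  by_contra hxP
  have : |f x| < 1 := hx
  simp [hfP ⟨f, hf⟩ hxP] at this

end ContinuousMap

/-- For a completely regular Hausdorff space `X`, the space `C_k(X,ℝ)` of continuous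
real-valued functions with the compact-open topology (Mathlib's default topology on
`C(X,ℝ)`) is countably tight if and only if every open `k`-cover of `X` has a countable
`k`-subcover. -/
theorem ck_countablyTight_iff_kcover {X : Type*} [TopologicalSpace X] [T35Space X] :
    (∀ (f : C(X, ℝ)) (S : Set C(X, ℝ)), f ∈ closure S →
        ∃ T ⊆ S, T.Countable ∧ f ∈ closure T) ↔
      ∀ Pfam : Set (Set X), (∀ P ∈ Pfam, IsOpen P) →
        (∀ K : Set X, IsCompact K → ∃ P ∈ Pfam, K ⊆ P) →
        ∃ S ⊆ Pfam, S.Countable ∧ ∀ K : Set X, IsCompact K → ∃ P ∈ S, K ⊆ P := by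
  constructor
  · exact fun H 𝒰 => ContinuousMap.exists_countable_kSubcover fun S => H 0 S
  · exact fun H f S => exists_countable_mem_closure_of_zero
      (fun S => ContinuousMap.exists_countable_zero_mem_closure H)
end

section
/- Let X be a topological space and let 𝒟 be a network of compact subsets of X closed under finite unions (i.e. for every compact K ⊆ X and open U ⊇ K there is D ∈ 𝒟 with K ⊆ D ⊆ U, and the union of any two members of 𝒟 is contained in a member of 𝒟). Let α_𝒟 be the topology on C(X,$) generated by the subbase {𝒪(D) : D ∈ 𝒟}, where 𝒪(D) := {U ∈ C(X,$) : D ⊆ U}, and let Y ∈ C(X,$). If (C(X,$), α_𝒟) is Fréchet at Y, then (C(X,$), α_𝒟) is Fréchet–Urysohn for finite sets at Y: for every family 𝒫 of finite subsets of C(X,$) such that every neighborhood of Y includes some member of 𝒫, there is a sequence (Pₙ)_{n<ω} of members of 𝒫 such that every neighborhood of Y includes Pₙ for all but finitely many n. -/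
open TopologicalSpace Topology Filter

/-! A finite family `p` of open sets has an open intersection `⋂ p`, and `d ⊆ ⋂ p` says exactly
that `p ⊆ 𝒪(d)`. Hence the closure of `{⋂ p : p ∈ P}` contains `Y`, a sequence `⋂ pₙ → Y` given
by the Fréchet property is eventually in every basic neighbourhood `𝒪(d)` of `Y`, and so
`pₙ ⊆ 𝒪(d)` eventually. The sets `𝒪(d)` with `d ∈ 𝒟`, `d ⊆ Y` form a neighbourhood base at `Y`
because `𝒟` is a compact network, so any two of them contain a third. -/

/-- The topology `α_𝒟` on the hyperspace `C(X,$)` of open sets, generated by the subbase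
`{𝒪(D) : D ∈ 𝒟}` where `𝒪(D) = {U open : D ⊆ U}`. -/
def alphaD {X : Type*} [TopologicalSpace X] (D : Set (Set X)) :
    TopologicalSpace (Opens X) :=
  TopologicalSpace.generateFrom
    {S : Set (Opens X) | ∃ d ∈ D, S = {U : Opens X | d ⊆ (U : Set X)}}

theorem Set.Finite.subset_coe_iInf_opens_iff {X : Type*} [TopologicalSpace X]
    {p : Set (Opens X)} (hp : p.Finite) (d : Set X) :
    d ⊆ ↑(⨅ U : p, (U : Opens X)) ↔ ∀ U ∈ p, d ⊆ U := by
  have := hp.to_subtype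
  rw [Opens.coe_iInf, Set.subset_iInter_iff, Subtype.forall]

theorem alphaD_nhds_basis {X : Type*} [TopologicalSpace X] {D : Set (Set X)} {Y : Opens X}
    (hne : ∃ d ∈ D, d ⊆ Y)
    (hdir : ∀ d₁ ∈ D, ∀ d₂ ∈ D, d₁ ∪ d₂ ⊆ Y → ∃ d ∈ D, d₁ ∪ d₂ ⊆ d ∧ d ⊆ Y) :
    (@nhds _ (alphaD D) Y).HasBasis (fun d => d ∈ D ∧ d ⊆ Y)
      (fun d => {U : Opens X | d ⊆ U}) := by
  have hsubbase : {S | Y ∈ S ∧ S ∈ {S | ∃ d ∈ D, S = {U : Opens X | d ⊆ U}}} =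
      (fun d : Set X => {U : Opens X | d ⊆ U}) '' {d | d ∈ D ∧ d ⊆ Y} := by
    ext S
    constructor
    · rintro ⟨hY, d, hd, rfl⟩
      exact ⟨d, ⟨hd, hY⟩, rfl⟩
    · rintro ⟨d, ⟨hd, hY⟩, rfl⟩
      exact ⟨hY, d, hd, rfl⟩
  rw [alphaD, nhds_generateFrom, hsubbase, iInf_image]
  refine hasBasis_biInf_principal ?_ hne
  rintro d₁ ⟨hd₁, hd₁Y⟩ d₂ ⟨hd₂, hd₂Y⟩
  obtain ⟨d, hd, hsub, hdY⟩ := hdir d₁ hd₁ d₂ hd₂ (Set.union_subset hd₁Y hd₂Y)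
  exact ⟨d, ⟨hd, hdY⟩, fun U hU => (Set.subset_union_left.trans hsub).trans hU,
    fun U hU => (Set.subset_union_right.trans hsub).trans hU⟩

theorem exists_seq_eventually_subset_nhds_of_frechet {X ι : Type*} [TopologicalSpace X]
    [TopologicalSpace (Opens X)] {Y : Opens X} {q : ι → Prop} {s : ι → Set X}
    (hbasis : (𝓝 Y).HasBasis q (fun i => {U : Opens X | s i ⊆ U}))
    (hFrechet : ∀ S : Set (Opens X), Y ∈ closure S →
      ∃ u : ℕ → Opens X, (∀ n, u n ∈ S) ∧ Tendsto u atTop (𝓝 Y))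
    {P : Set (Set (Opens X))} (hPfin : ∀ p ∈ P, p.Finite) (hP : ∀ N ∈ 𝓝 Y, ∃ p ∈ P, p ⊆ N) :
    ∃ u : ℕ → Set (Opens X), (∀ n, u n ∈ P) ∧ ∀ N ∈ 𝓝 Y, ∀ᶠ n in atTop, u n ⊆ N := by
  set V : Set (Opens X) → Opens X := fun p => ⨅ U : p, (U : Opens X)
  have hV : ∀ p ∈ P, ∀ i, V p ∈ {U : Opens X | s i ⊆ U} ↔ p ⊆ {U : Opens X | s i ⊆ U} :=
    fun p hp i => (hPfin p hp).subset_coe_iInf_opens_iff (s i)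
  have hY : Y ∈ closure (V '' P) := by
    refine (mem_closure_iff_nhds_basis hbasis).2 fun i hi => ?_
    obtain ⟨p, hp, hpN⟩ := hP _ (hbasis.mem_of_mem hi)
    exact ⟨V p, Set.mem_image_of_mem V hp, (hV p hp i).2 hpN⟩
  obtain ⟨u, hu, hlim⟩ := hFrechet _ hY
  choose p hp hpu using hu
  refine ⟨p, hp, fun N hN => ?_⟩
  obtain ⟨i, hi, hiN⟩ := hbasis.mem_iff.1 hN
  filter_upwards [hbasis.tendsto_right_iff.1 hlim i hi] with n hn
  rw [← hpu n] at hn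
  exact ((hV _ (hp n) i).1 hn).trans hiN

theorem frechet_implies_FUfin_general {X : Type*} [TopologicalSpace X]
    (D : Set (Set X))
    (hcpt : ∀ d ∈ D, IsCompact d)
    (hnet : ∀ K : Set X, IsCompact K → ∀ U : Set X, IsOpen U → K ⊆ U →
      ∃ d ∈ D, K ⊆ d ∧ d ⊆ U)
    (Y : Opens X)
    (hFrechet : ∀ S : Set (Opens X), Y ∈ @closure _ (alphaD D) S →
      ∃ u : ℕ → Opens X, (∀ n, u n ∈ S) ∧
        Filter.Tendsto u Filter.atTop (@nhds _ (alphaD D) Y)) :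
    ∀ P : Set (Set (Opens X)), (∀ p ∈ P, p.Finite) →
      (∀ N ∈ @nhds _ (alphaD D) Y, ∃ p ∈ P, p ⊆ N) →
      ∃ u : ℕ → Set (Opens X), (∀ n, u n ∈ P) ∧
        ∀ N ∈ @nhds _ (alphaD D) Y, ∀ᶠ n in Filter.atTop, u n ⊆ N := by
  intro P hPfin hP
  obtain ⟨d, hd, -, hdY⟩ := hnet ∅ isCompact_empty Y Y.isOpen (Set.empty_subset _)
  have hbasis := alphaD_nhds_basis ⟨d, hd, hdY⟩ fun d₁ hd₁ d₂ hd₂ hY =>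
    hnet _ ((hcpt d₁ hd₁).union (hcpt d₂ hd₂)) Y Y.isOpen hY
  let _ : TopologicalSpace (Opens X) := alphaD D
  exact exists_seq_eventually_subset_nhds_of_frechet hbasis hFrechet hPfin hP

/-- If `𝒟` is a network of compact subsets of `X` closed under finite unions and the
hyperspace `(C(X,$), α_𝒟)` is Fréchet at an open set `Y`, then it is Fréchet–Urysohn for
finite sets at `Y`. -/
theorem frechet_implies_FUfin {X : Type*} [TopologicalSpace X]
    (D : Set (Set X))
    (hcpt : ∀ d ∈ D, IsCompact d)
    (hnet : ∀ K : Set X, IsCompact K → ∀ U : Set X, IsOpen U → K ⊆ U →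
      ∃ d ∈ D, K ⊆ d ∧ d ⊆ U)
    (hunion : ∀ d₁ ∈ D, ∀ d₂ ∈ D, ∃ d ∈ D, d₁ ∪ d₂ ⊆ d)
    (Y : Opens X)
    (hFrechet : ∀ S : Set (Opens X), Y ∈ @closure _ (alphaD D) S →
      ∃ u : ℕ → Opens X, (∀ n, u n ∈ S) ∧
        Filter.Tendsto u Filter.atTop (@nhds _ (alphaD D) Y)) :
    ∀ P : Set (Set (Opens X)), (∀ p ∈ P, p.Finite) →
      (∀ N ∈ @nhds _ (alphaD D) Y, ∃ p ∈ P, p ⊆ N) →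
      ∃ u : ℕ → Set (Opens X), (∀ n, u n ∈ P) ∧
        ∀ N ∈ @nhds _ (alphaD D) Y, ∀ᶠ n in Filter.atTop, u n ⊆ N :=
  frechet_implies_FUfin_general D hcpt hnet Y hFrechet
end

section
/- Let X be a completely regular topological space and let 𝒟 be a network of compact subsets of X closed under finite unions (for every compact K ⊆ X and open U ⊇ K there is D ∈ 𝒟 with K ⊆ D ⊆ U, and the union of any two members of 𝒟 is contained in a member of 𝒟). Let α_𝒟 be the topology on C(X,$) generated by the subbase {𝒪(D) : D ∈ 𝒟}, and let C_{α_𝒟}(X,ℝ) be the set of continuous real-valued functions on X with the topology generated by the subbase {[D,V] : D ∈ 𝒟, V open in ℝ}, where [D,V] := {f : f(D) ⊆ V}. Then the following are equivalent: (1) (C(X,$), α_𝒟) is Fréchet at the point X; (2) (C(X,$), α_𝒟) is Fréchet–Urysohn for finite sets at the point X; (3) C_{α_𝒟}(X,ℝ) is Fréchet–Urysohn for finite sets at every point; (4) C_{α_𝒟}(X,ℝ) is Fréchet at every point; (5) for every open 𝒟-cover 𝒞 of X (a family of open subsets of X such that every D ∈ 𝒟 is contained in some member of 𝒞) there exists a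 countable subfamily 𝒮 ⊆ 𝒞 such that every D ∈ 𝒟 is contained in all but finitely many members of 𝒮. -/
open TopologicalSpace Topology Filter

/-- The topology `α_𝒟(X,ℝ)` on `C(X,ℝ)`, generated by the subbase of sets
`[D,V] = {f : f(D) ⊆ V}`, `D ∈ 𝒟`, `V` open in `ℝ`. -/
def alphaDFun {X : Type*} [TopologicalSpace X] (D : Set (Set X)) :
    TopologicalSpace C(X, ℝ) :=
  TopologicalSpace.generateFrom
    {S : Set C(X, ℝ) | ∃ d ∈ D, ∃ V : Set ℝ, IsOpen V ∧
      S = {f : C(X, ℝ) | ∀ x ∈ d, f x ∈ V}}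

/-- A topological space (given by a topology `t`) is Fréchet at `y`. -/
def FrechetAt {Y : Type*} (t : TopologicalSpace Y) (y : Y) : Prop :=
  ∀ S : Set Y, y ∈ @closure _ t S →
    ∃ u : ℕ → Y, (∀ n, u n ∈ S) ∧ Filter.Tendsto u Filter.atTop (@nhds _ t y)

/-- A topological space (given by a topology `t`) is Fréchet–Urysohn for finite sets
at `y`. -/
def FUfinAt {Y : Type*} (t : TopologicalSpace Y) (y : Y) : Prop :=
  ∀ P : Set (Set Y), (∀ p ∈ P, p.Finite) →
    (∀ N ∈ @nhds _ t y, ∃ p ∈ P, p ⊆ N) →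
    ∃ u : ℕ → Set Y, (∀ n, u n ∈ P) ∧
      ∀ N ∈ @nhds _ t y, ∀ᶠ n in Filter.atTop, u n ⊆ N

/-! Because `𝒟` is a network of compact sets, `α_𝒟` coincides with `α_𝒦` for `𝒦` the family
of all compact sets, on `C(X,ℝ)` this is the compact-open topology, and condition (5) for `𝒟`
is condition (5) for `𝒦`. In the hyperspace the sets `𝒪(K)` form a neighbourhood basis of `X`,
so a sequence of open sets converges to `X` iff every compact set lies in almost all of its
terms; this gives (1) ⇒ (5) ⇒ (2) ⇒ (1), a finite family of open sets being replaced by its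
intersection. For (4) ⇒ (5), the constant function `1` is a limit of functions vanishing
outside members of a given cover (Urysohn's lemma, via the Stone–Čech compactification).
For (5) ⇒ (3), apply (5) to the cover by the sets `V k ∩ ⋂ g ∈ p, {|g - f| < 1/(k+1)}`,
where `(V k)` is a sequence of proper open sets given by (5): the points missed by the `V k`
force `k → ∞` along the resulting sequence. If no such `(V k)` exists, some compact set has
`X` as its only open neighbourhood, and the index can simply run through `ℕ`. -/

open Set

theorem frechetAt_of_fUfinAt {Y : Type*} {t : TopologicalSpace Y} {y : Y} (h : FUfinAt t y) :
    FrechetAt t y := by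
  intro S hS
  obtain ⟨u, huS, hu⟩ := h ((fun z => {z}) '' S)
    (by rintro _ ⟨z, -, rfl⟩; exact finite_singleton z) fun N hN => by
      obtain ⟨z, hzN, hzS⟩ := (@mem_closure_iff_nhds _ t _ _).1 hS N hN
      exact ⟨{z}, mem_image_of_mem _ hzS, singleton_subset_iff.2 hzN⟩
  choose v hvS hv using huS
  exact ⟨v, hvS, fun N hN => (hu N hN).mono fun n hn => hn (hv n ▸ mem_singleton (v n))⟩

def HasGammaSubcovers {X : Type*} [TopologicalSpace X] (D : Set (Set X)) : Prop :=
  ∀ C : Set (Set X), (∀ c ∈ C, IsOpen c) → (∀ d ∈ D, ∃ c ∈ C, d ⊆ c) →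
    ∃ S : ℕ → Set X, (∀ n, S n ∈ C) ∧ ∀ d ∈ D, ∀ᶠ n in Filter.atTop, d ⊆ S n

section Network

variable {X : Type*} [TopologicalSpace X] {D E : Set (Set X)}

theorem alphaD_eq_of_network (hDE : D ⊆ E)
    (hnet : ∀ e ∈ E, ∀ U : Set X, IsOpen U → e ⊆ U → ∃ d ∈ D, e ⊆ d ∧ d ⊆ U) :
    alphaD D = alphaD E := by
  refine le_antisymm ?_ (le_generateFrom ?_)
  · refine le_generateFrom ?_
    rintro _ ⟨e, he, rfl⟩
    refine @isOpen_iff_forall_mem_open _ (alphaD D) _ |>.2 fun U heU => ?_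
    obtain ⟨d, hd, hed, hdU⟩ := hnet e he U U.isOpen heU
    exact ⟨{V | d ⊆ (V : Set X)}, fun V hdV => hed.trans hdV,
      isOpen_generateFrom_of_mem ⟨d, hd, rfl⟩, hdU⟩
  · rintro _ ⟨d, hd, rfl⟩
    exact isOpen_generateFrom_of_mem ⟨d, hDE hd, rfl⟩

theorem alphaDFun_eq_of_network (hDE : D ⊆ E)
    (hnet : ∀ e ∈ E, ∀ U : Set X, IsOpen U → e ⊆ U → ∃ d ∈ D, e ⊆ d ∧ d ⊆ U) :
    alphaDFun D = alphaDFun E := by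
  refine le_antisymm ?_ (le_generateFrom ?_)
  · refine le_generateFrom ?_
    rintro _ ⟨e, he, V, hV, rfl⟩
    refine @isOpen_iff_forall_mem_open _ (alphaDFun D) _ |>.2 fun f hf => ?_
    obtain ⟨d, hd, hed, hdV⟩ := hnet e he (f ⁻¹' V) (hV.preimage f.continuous) hf
    exact ⟨{g | ∀ x ∈ d, g x ∈ V}, fun g hg x hx => hg x (hed hx),
      isOpen_generateFrom_of_mem ⟨d, hd, V, hV, rfl⟩, fun x hx => hdV hx⟩
  · rintro _ ⟨d, hd, V, hV, rfl⟩
    exact isOpen_generateFrom_of_mem ⟨d, hDE hd, V, hV, rfl⟩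

theorem alphaDFun_isCompact : alphaDFun {K : Set X | IsCompact K} = ContinuousMap.compactOpen := by
  rw [alphaDFun, ContinuousMap.compactOpen_eq]
  congr 1
  ext S
  simp only [mem_ofPred_eq, mem_image2, MapsTo, eq_comm]

theorem hasGammaSubcovers_congr (hDE : D ⊆ E) (hED : ∀ e ∈ E, ∃ d ∈ D, e ⊆ d) :
    HasGammaSubcovers D ↔ HasGammaSubcovers E := by
  refine ⟨fun h C hC hcov => ?_, fun h C hC hcov => ?_⟩
  · obtain ⟨S, hSC, hS⟩ := h C hC fun d hd => hcov d (hDE hd)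
    refine ⟨S, hSC, fun e he => ?_⟩
    obtain ⟨d, hd, hed⟩ := hED e he
    filter_upwards [hS d hd] with n hn using hed.trans hn
  · obtain ⟨S, hSC, hS⟩ := h C hC fun e he => by
      obtain ⟨d, hd, hed⟩ := hED e he
      obtain ⟨c, hc, hdc⟩ := hcov d hd
      exact ⟨c, hc, hed.trans hdc⟩
    exact ⟨S, hSC, fun d hd => hS d (hDE hd)⟩

end Network

theorem ContinuousMap.hasBasis_nhds_dist {X Y : Type*} [TopologicalSpace X] [PseudoMetricSpace Y]
    (f : C(X, Y)) :
    (𝓝 f).HasBasis (fun p : Set X × ℝ => IsCompact p.1 ∧ 0 < p.2)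
      fun p => {g | ∀ x ∈ p.1, dist (f x) (g x) < p.2} :=
  nhds_basis_uniformity' Metric.uniformity_basis_dist.compactConvergenceUniformity

theorem CompletelyRegularSpace.exists_continuous_one_zero_of_isCompact {X : Type*}
    [TopologicalSpace X] [CompletelyRegularSpace X] {K U : Set X} (hK : IsCompact K)
    (hU : IsOpen U) (hKU : K ⊆ U) : ∃ g : C(X, ℝ), EqOn g 1 K ∧ EqOn g 0 Uᶜ := by
  obtain ⟨V, hV, rfl⟩ := isInducing_stoneCechUnit.isOpen_iff.1 hU
  obtain ⟨g, hg0, hg1, -⟩ := exists_continuous_zero_one_of_isClosed hV.isClosed_compl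
    (hK.image continuous_stoneCechUnit).isClosed
    (disjoint_compl_left_iff_subset.2 (image_subset_iff.2 hKU))
  exact ⟨g.comp ⟨stoneCechUnit, continuous_stoneCechUnit⟩,
    fun x hx => hg1 (mem_image_of_mem _ hx), fun x hx => hg0 hx⟩

section Hyperspace

variable {X : Type*} [TopologicalSpace X] {D : Set (Set X)}

theorem hasBasis_nhds_top_alphaD (hne : D.Nonempty) (hdir : DirectedOn (· ⊆ ·) D) :
    (@nhds _ (alphaD D) ⊤).HasBasis (· ∈ D) fun d => {U : Opens X | d ⊆ U} := by
  have hgen : {s | ⊤ ∈ s ∧ s ∈ {S | ∃ d ∈ D, S = {U : Opens X | d ⊆ (U : Set X)}}} =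
      (fun d : Set X => {U : Opens X | d ⊆ U}) '' D := by
    ext s
    constructor
    · rintro ⟨-, d, hd, rfl⟩
      exact mem_image_of_mem _ hd
    · rintro ⟨d, hd, rfl⟩
      exact ⟨subset_univ d, d, hd, rfl⟩
  rw [alphaD, TopologicalSpace.nhds_generateFrom, hgen, iInf_image]
  exact hasBasis_biInf_principal (fun d₁ hd₁ d₂ hd₂ => (hdir d₁ hd₁ d₂ hd₂).imp
    fun d ⟨hd, h₁, h₂⟩ => ⟨hd, fun U hU => h₁.trans hU, fun U hU => h₂.trans hU⟩) hne

variable (hD : (@nhds _ (alphaD D) ⊤).HasBasis (· ∈ D) fun d => {U : Opens X | d ⊆ U})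
include hD

theorem hasGammaSubcovers_of_frechetAt_top (h : FrechetAt (alphaD D) ⊤) : HasGammaSubcovers D := by
  intro C hC hcov
  obtain ⟨u, huC, hu⟩ := h {U | (U : Set X) ∈ C} <|
    (@mem_closure_iff_nhds_basis _ (alphaD D) _ _ _ _ _ hD).2 fun d hd => by
      obtain ⟨c, hcC, hdc⟩ := hcov d hd
      exact ⟨⟨c, hC c hcC⟩, hcC, hdc⟩
  exact ⟨fun n => u n, huC, fun d hd => hD.tendsto_right_iff.1 hu d hd⟩

theorem HasGammaSubcovers.fUfinAt_top (h : HasGammaSubcovers D) : FUfinAt (alphaD D) ⊤ := by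
  intro P hPfin hP
  obtain ⟨S, hSC, hS⟩ := h {s | ∃ p ∈ P, s = ⋂ U ∈ p, (U : Set X)}
    (by rintro _ ⟨p, hp, rfl⟩; exact (hPfin p hp).isOpen_biInter fun U _ => U.isOpen)
    fun d hd => by
      obtain ⟨p, hpP, hpd⟩ := hP _ (hD.mem_of_mem hd)
      exact ⟨_, ⟨p, hpP, rfl⟩, subset_iInter₂ fun U hU => hpd hU⟩
  choose p hpP hSp using hSC
  refine ⟨p, hpP, fun N hN => ?_⟩
  obtain ⟨d, hd, hdN⟩ := hD.mem_iff.1 hN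
  filter_upwards [hS d hd] with n hn U hU
  exact hdN (hn.trans (hSp n ▸ biInter_subset_of_mem hU))

end Hyperspace

section FunctionSpace

variable {X : Type*} [TopologicalSpace X]

theorem hasGammaSubcovers_of_frechetAt_one [CompletelyRegularSpace X]
    (h : FrechetAt ContinuousMap.compactOpen (1 : C(X, ℝ))) :
    HasGammaSubcovers {K : Set X | IsCompact K} := by
  intro C hC hcov
  obtain ⟨u, huC, hu⟩ := h {g | ∃ c ∈ C, EqOn g 0 cᶜ} <|
    (mem_closure_iff_nhds_basis (ContinuousMap.hasBasis_nhds_dist 1)).2 fun ⟨K, ε⟩ ⟨hK, hε⟩ => by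
      obtain ⟨c, hcC, hKc⟩ := hcov K hK
      obtain ⟨g, hg1, hg0⟩ :=
        CompletelyRegularSpace.exists_continuous_one_zero_of_isCompact hK (hC c hcC) hKc
      exact ⟨g, ⟨c, hcC, hg0⟩, fun x hx => by simpa [hg1 hx] using hε⟩
  choose c hcC hc using huC
  refine ⟨c, hcC, fun K hK => ?_⟩
  filter_upwards [(ContinuousMap.hasBasis_nhds_dist 1).tendsto_right_iff.1 hu (K, 1) ⟨hK, one_pos⟩]
    with n hn x hx
  by_contra hxc
  simpa [hc n hxc] using hn x hx

theorem HasGammaSubcovers.exists_diagonal (h : HasGammaSubcovers {K : Set X | IsCompact K})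
    (C : ℕ → Set (Set X)) (hC : ∀ k, ∀ c ∈ C k, IsOpen c)
    (hcov : ∀ k, ∀ K : Set X, IsCompact K → ∃ c ∈ C k, K ⊆ c) :
    ∃ (k : ℕ → ℕ) (c : ℕ → Set X), (∀ n, c n ∈ C (k n)) ∧ Tendsto k atTop atTop ∧
      ∀ K : Set X, IsCompact K → ∀ᶠ n in atTop, K ⊆ c n := by
  by_cases hdom : ∃ K₀ : Set X, IsCompact K₀ ∧ ∀ U, IsOpen U → K₀ ⊆ U → U = univ
  · obtain ⟨K₀, hK₀, hK₀U⟩ := hdom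
    choose c hcC hc using fun k => hcov k K₀ hK₀
    refine ⟨id, c, hcC, tendsto_id, fun K _ => Eventually.of_forall fun n => ?_⟩
    rw [hK₀U _ (hC n _ (hcC n)) (hc n)]
    exact subset_univ K
  push Not at hdom
  obtain ⟨V, hVC, hV⟩ := h {U | IsOpen U ∧ U ≠ univ} (fun _ hU => hU.1) fun K hK => by
    obtain ⟨U, hU, hKU, hUne⟩ := hdom K hK
    exact ⟨U, ⟨hU, hUne⟩, hKU⟩
  choose x hx using fun k => (ne_univ_iff_exists_notMem _).1 (hVC k).2
  obtain ⟨S, hSC, hS⟩ := h {s | ∃ k, ∃ c ∈ C k, s = V k ∩ c}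
    (by rintro _ ⟨k, c, hc, rfl⟩; exact (hVC k).1.inter (hC k c hc)) fun K hK => by
      obtain ⟨k, hKV⟩ := (hV K hK).exists
      obtain ⟨c, hc, hKc⟩ := hcov k K hK
      exact ⟨_, ⟨k, c, hc, rfl⟩, subset_inter hKV hKc⟩
  choose k c hc hSkc using hSC
  refine ⟨k, c, hc, tendsto_atTop.2 fun m => ?_, fun K hK => ?_⟩
  · filter_upwards [hS _ ((finite_Iio m).image x).isCompact] with n hn
    by_contra! hkm
    exact hx (k n) (hn.trans_eq (hSkc n) (mem_image_of_mem x hkm)).1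
  · filter_upwards [hS K hK] with n hn
    exact (hn.trans_eq (hSkc n)).trans inter_subset_right

theorem HasGammaSubcovers.fUfinAt_compactOpen (h : HasGammaSubcovers {K : Set X | IsCompact K})
    (f : C(X, ℝ)) : FUfinAt ContinuousMap.compactOpen f := by
  intro P hPfin hP
  obtain ⟨k, c, hc, hk, hKc⟩ := h.exists_diagonal
    (fun k => {s | ∃ p ∈ P, s = ⋂ g ∈ p, {x | dist (f x) (g x) < 1 / (k + 1)}})
    (by
      rintro k _ ⟨p, hp, rfl⟩
      exact (hPfin p hp).isOpen_biInter fun g _ =>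
        isOpen_lt (f.continuous.dist g.continuous) continuous_const)
    fun k K hK => by
      obtain ⟨p, hpP, hp⟩ :=
        hP _ ((ContinuousMap.hasBasis_nhds_dist f).mem_of_mem (i := (K, 1 / ((k : ℝ) + 1)))
          ⟨hK, by positivity⟩)
      exact ⟨_, ⟨p, hpP, rfl⟩, subset_iInter₂ fun g hg x hx => hp hg x hx⟩
  choose p hpP hcp using hc
  refine ⟨p, hpP, fun N hN => ?_⟩
  obtain ⟨⟨K, ε⟩, ⟨hK, hε⟩, hN⟩ := (ContinuousMap.hasBasis_nhds_dist f).mem_iff.1 hN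
  obtain ⟨m, hm⟩ := exists_nat_one_div_lt hε
  filter_upwards [hKc K hK, hk.eventually_ge_atTop m] with n hKn hmn g hg
  refine hN fun x hx => ?_
  calc dist (f x) (g x) < 1 / (k n + 1) := mem_iInter₂.1 ((hKn.trans_eq (hcp n)) hx) g hg
    _ ≤ 1 / (m + 1) := by gcongr
    _ < ε := hm

end FunctionSpace

theorem frechet_tfae_general {X : Type*} [TopologicalSpace X] [CompletelyRegularSpace X]
    (D : Set (Set X))
    (hcpt : ∀ d ∈ D, IsCompact d)
    (hnet : ∀ K : Set X, IsCompact K → ∀ U : Set X, IsOpen U → K ⊆ U →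
      ∃ d ∈ D, K ⊆ d ∧ d ⊆ U) :
    List.TFAE
      [FrechetAt (alphaD D) (⊤ : Opens X),
       FUfinAt (alphaD D) (⊤ : Opens X),
       ∀ f : C(X, ℝ), FUfinAt (alphaDFun D) f,
       ∀ f : C(X, ℝ), FrechetAt (alphaDFun D) f,
       ∀ C : Set (Set X), (∀ c ∈ C, IsOpen c) → (∀ d ∈ D, ∃ c ∈ C, d ⊆ c) →
         ∃ S : ℕ → Set X, (∀ n, S n ∈ C) ∧
           ∀ d ∈ D, ∀ᶠ n in Filter.atTop, d ⊆ S n] := by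
  have hDK : D ⊆ {K : Set X | IsCompact K} := hcpt
  have hKD : ∀ K : Set X, IsCompact K → ∃ d ∈ D, K ⊆ d := fun K hK =>
    (hnet K hK univ isOpen_univ (subset_univ K)).imp fun _ ⟨hd, hKd, _⟩ => ⟨hd, hKd⟩
  show List.TFAE [_, _, _, _, HasGammaSubcovers D]
  rw [alphaD_eq_of_network hDK hnet, alphaDFun_eq_of_network hDK hnet, alphaDFun_isCompact,
    hasGammaSubcovers_congr hDK hKD]
  have hbasis := hasBasis_nhds_top_alphaD (D := {K : Set X | IsCompact K}) ⟨∅, isCompact_empty⟩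
    (directedOn_of_sup_mem fun _ _ => IsCompact.union)
  tfae_have 1 → 5 := hasGammaSubcovers_of_frechetAt_top hbasis
  tfae_have 5 → 2 := HasGammaSubcovers.fUfinAt_top hbasis
  tfae_have 2 → 1 := frechetAt_of_fUfinAt
  tfae_have 5 → 3 := HasGammaSubcovers.fUfinAt_compactOpen
  tfae_have 3 → 4 := fun h f => frechetAt_of_fUfinAt (h f)
  tfae_have 4 → 5 := fun h => hasGammaSubcovers_of_frechetAt_one (h 1)
  tfae_finish

/-- For a completely regular space `X` and a network `𝒟` of compact subsets of `X` closed
under finite unions, the following are equivalent: `(C(X,$), α_𝒟)` is Fréchet at the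
whole space `X`; it is Fréchet–Urysohn for finite sets at `X`; `C_{α_𝒟}(X,ℝ)` is
Fréchet–Urysohn for finite sets (at every point); `C_{α_𝒟}(X,ℝ)` is Fréchet (at every
point); for every open `𝒟`-cover `𝒞` of `X` there is a countable subfamily (a sequence
of members of `𝒞`) such that every `D ∈ 𝒟` is contained in all but finitely many of its
members. -/
theorem frechet_tfae {X : Type*} [TopologicalSpace X] [CompletelyRegularSpace X]
    (D : Set (Set X))
    (hcpt : ∀ d ∈ D, IsCompact d)
    (hnet : ∀ K : Set X, IsCompact K → ∀ U : Set X, IsOpen U → K ⊆ U →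
      ∃ d ∈ D, K ⊆ d ∧ d ⊆ U)
    (hunion : ∀ d₁ ∈ D, ∀ d₂ ∈ D, ∃ d ∈ D, d₁ ∪ d₂ ⊆ d) :
    List.TFAE
      [FrechetAt (alphaD D) (⊤ : Opens X),
       FUfinAt (alphaD D) (⊤ : Opens X),
       ∀ f : C(X, ℝ), FUfinAt (alphaDFun D) f,
       ∀ f : C(X, ℝ), FrechetAt (alphaDFun D) f,
       ∀ C : Set (Set X), (∀ c ∈ C, IsOpen c) → (∀ d ∈ D, ∃ c ∈ C, d ⊆ c) →
         ∃ S : ℕ → Set X, (∀ n, S n ∈ C) ∧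
           ∀ d ∈ D, ∀ᶠ n in Filter.atTop, d ⊆ S n] :=
  frechet_tfae_general D hcpt hnet
end
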